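/- arXiv:0709.3245 — 6 statements merged into one kernel-verified Lean document; each statement's English description precedes it below -/
import Mathlib

section
/- Let k be an algebraically closed field, V a finite-dimensional k-vector space, and G a finite primitive subgroup of GL(V). Then every abelian normal subgroup of G is cyclic and is contained in the center Z(G) of G. -/
open Module.End in
lemma exists_common_eigenvec {k V : Type} [Field k] [IsAlgClosed k] [AddCommGroup V] [Module k V]
    [FiniteDimensional k V] [Nontrivial V] {ι : Type} [Fintype ι] (f : ι → Module.End k V)
    (hc : ∀ i j, Commute (f i) (f j)) :
    ∃ χ : ι → k, (⨅ i, (f i).eigenspace (χ i)) ≠ ⊥ := by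
  classical
  suffices h : ∀ s : Finset ι, ∃ χ : ι → k, s.inf (fun i => (f i).eigenspace (χ i)) ≠ ⊥ by
    obtain ⟨χ, hχ⟩ := h Finset.univ
    refine ⟨χ, ?_⟩
    rw [Finset.inf_eq_iInf] at hχ
    simpa using hχ
  intro s
  induction s using Finset.induction_on with
  | empty => exact ⟨fun _ => 0, by simp⟩
  | @insert i t hit ih =>
    obtain ⟨χ, hχ⟩ := ih
    set U := t.inf (fun j => (f j).eigenspace (χ j)) with hU
    have hfp : ∀ x ∈ U, f i x ∈ U := by
      intro x hx
      rw [Submodule.mem_finsetInf] at hx ⊢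
      intro j hj
      exact mapsTo_genEigenspace_of_comm (hc j i) (χ j) 1 (hx j hj)
    have : Nontrivial U := Submodule.nontrivial_iff_ne_bot.mpr hχ
    obtain ⟨μ, hμ⟩ := Module.End.exists_eigenvalue ((f i).restrict hfp)
    refine ⟨Function.update χ i μ, ?_⟩
    rw [Finset.inf_insert]
    have ht : t.inf (fun j => (f j).eigenspace (Function.update χ i μ j))
        = t.inf (fun j => (f j).eigenspace (χ j)) := by
      refine Finset.inf_congr rfl fun j hj => ?_
      rw [Function.update_of_ne (by rintro rfl; exact hit hj)]
    rw [Function.update_self, ht, ← hU]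
    have hinf : U ⊓ (f i).eigenspace μ
        = (eigenspace ((f i).restrict hfp) μ).map U.subtype :=
      Submodule.inf_genEigenspace (f i) U hfp
    rw [inf_comm, hinf]
    obtain ⟨x, hx, hx0⟩ := (Submodule.ne_bot_iff _).mp hμ
    refine (Submodule.ne_bot_iff _).mpr ⟨x, Submodule.mem_map_of_mem hx, by simpa using hx0⟩

/-- A finite subgroup of `GL(V)`, realized as an injective homomorphism `ρ : G →* GL(V)`,
is *primitive* if `V` is a simple `kG`-module and there is no decomposition of `V` into a
direct sum of `r ≥ 2` nonzero subspaces that are permuted by every element of `G`. -/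
def IsPrimitiveLinearGroup {k V G : Type} [Field k] [AddCommGroup V] [Module k V]
    [Group G] (ρ : G →* (V →ₗ[k] V)ˣ) : Prop :=
  Nontrivial V ∧
  (∀ U : Submodule k V, (∀ g : G, ∀ v ∈ U, (ρ g : V →ₗ[k] V) v ∈ U) → U = ⊥ ∨ U = ⊤) ∧
  ¬ ∃ (r : ℕ) (Vs : Fin r → Submodule k V), 2 ≤ r ∧ (∀ i, Vs i ≠ ⊥) ∧
      DirectSum.IsInternal Vs ∧
      ∀ (g : G) (i : Fin r), ∃ j : Fin r, (Vs i).map (ρ g : V →ₗ[k] V) = Vs j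

/-- Let `k` be an algebraically closed field, `V` a finite-dimensional `k`-vector space, and
`G` a finite primitive subgroup of `GL(V)`.  Then every abelian normal subgroup of `G` is
cyclic and is contained in the center of `G`. -/
theorem stmt_5 (k V G : Type) [Field k] [IsAlgClosed k] [AddCommGroup V] [Module k V]
    [FiniteDimensional k V] [Group G] [Finite G]
    (ρ : G →* (V →ₗ[k] V)ˣ) (hinj : Function.Injective ρ)
    (hprim : IsPrimitiveLinearGroup ρ)
    (A : Subgroup G) [A.Normal] (hab : ∀ a ∈ A, ∀ b ∈ A, a * b = b * a) :
    IsCyclic A ∧ A ≤ Subgroup.center G := by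
  classical
  have hAn : A.Normal := inferInstance
  have hV : Nontrivial V := hprim.1
  have : Fintype A := Fintype.ofFinite A
  -- basic computation lemmas
  have hmul : ∀ (g h : G) (v : V),
      (ρ g : V →ₗ[k] V) ((ρ h : V →ₗ[k] V) v) = (ρ (g * h) : V →ₗ[k] V) v := by
    intro g h v
    rw [map_mul, Units.val_mul]
    rfl
  have hcomm : ∀ a b : A, Commute ((ρ (a : G) : V →ₗ[k] V)) ((ρ (b : G) : V →ₗ[k] V)) := by
    intro a b
    unfold Commute SemiconjBy
    rw [← Units.val_mul, ← Units.val_mul, ← map_mul, ← map_mul, hab a a.2 b b.2]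
  -- joint eigenspaces
  set W : (A → k) → Submodule k V :=
    fun χ => ⨅ a : A, Module.End.eigenspace (ρ (a : G) : V →ₗ[k] V) (χ a) with hWdef
  have hmemW : ∀ (χ : A → k) (v : V), v ∈ W χ ↔ ∀ a : A, (ρ (a : G) : V →ₗ[k] V) v = χ a • v := by
    intro χ v
    rw [hWdef]
    simp only [Submodule.mem_iInf, Module.End.mem_eigenspace_iff]
  -- conjugation permutes the joint eigenspaces
  have hmemA : ∀ (g : G) (b : A), g⁻¹ * (b : G) * g ∈ A := by
    intro g b
    simpa using hAn.conj_mem (b : G) b.2 g⁻¹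
  have key : ∀ (g : G) (χ : A → k),
      (W χ).map (ρ g : V →ₗ[k] V) = W (fun b => χ ⟨g⁻¹ * (b : G) * g, hmemA g b⟩) := by
    intro g χ
    ext v
    rw [Submodule.mem_map, hmemW]
    constructor
    · rintro ⟨w, hw, rfl⟩ b
      have h1 := (hmemW χ w).mp hw ⟨g⁻¹ * (b : G) * g, hmemA g b⟩
      rw [hmul, show (b : G) * g = g * (g⁻¹ * (b : G) * g) by group, ← hmul, h1, map_smul]
    · intro hv
      refine ⟨(ρ g⁻¹ : V →ₗ[k] V) v, (hmemW χ _).mpr fun a => ?_, by rw [hmul]; simp⟩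
      set b : A := ⟨g * (a : G) * g⁻¹, by simpa using hAn.conj_mem (a : G) a.2 g⟩ with hbdef
      have h1 := hv b
      have h2 : (⟨g⁻¹ * (b : G) * g, hmemA g b⟩ : A) = a := by
        apply Subtype.ext
        show g⁻¹ * (g * (a : G) * g⁻¹) * g = (a : G)
        group
      rw [h2] at h1
      rw [hmul, show (a : G) * g⁻¹ = g⁻¹ * (b : G) by simp [hbdef]; group, ← hmul, h1, map_smul]
  -- the joint eigenspaces are independent
  have hindep : iSupIndep W := by
    have h1 : iSupIndep (fun χ : A → k =>
        ⨅ a : A, Module.End.maxGenEigenspace (ρ (a : G) : V →ₗ[k] V) (χ a)) :=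
      Module.End.independent_iInf_maxGenEigenspace_of_forall_mapsTo _
        (fun i j φ => Module.End.mapsTo_maxGenEigenspace_of_comm (hcomm j i) φ)
    exact h1.mono fun χ => iInf_mono fun a =>
      (Module.End.genEigenspace _ _).monotone le_top
  -- there is a common eigenvector
  obtain ⟨χ₁, hχ₁⟩ := exists_common_eigenvec (fun a : A => (ρ (a : G) : V →ₗ[k] V)) hcomm
  -- the sum of all joint eigenspaces is G-invariant, hence everything
  have hTinv : ∀ g : G, ∀ v ∈ (⨆ χ : A → k, W χ), (ρ g : V →ₗ[k] V) v ∈ ⨆ χ : A → k, W χ := by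
    intro g v hv
    have h1 : (ρ g : V →ₗ[k] V) v ∈ (⨆ χ : A → k, W χ).map (ρ g : V →ₗ[k] V) :=
      Submodule.mem_map_of_mem hv
    rw [Submodule.map_iSup] at h1
    have h2 : (⨆ χ : A → k, (W χ).map (ρ g : V →ₗ[k] V)) ≤ ⨆ χ : A → k, W χ :=
      iSup_le fun χ => by rw [key g χ]; exact le_iSup W _
    exact h2 h1
  have hTtop : (⨆ χ : A → k, W χ) = ⊤ := by
    rcases hprim.2.1 (⨆ χ : A → k, W χ) hTinv with h | h
    · exact (hχ₁ (le_bot_iff.mp (h ▸ le_iSup W χ₁))).elim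
    · exact h
  have hSfin : {χ : A → k | W χ ≠ ⊥}.Finite :=
    WellFoundedGT.finite_ne_bot_of_iSupIndep hindep
  by_cases hS : ∀ χ : A → k, W χ ≠ ⊥ → χ = χ₁
  · -- exactly one joint eigenspace: A acts by scalars
    have hWtop : W χ₁ = ⊤ := by
      refine le_antisymm le_top (hTtop ▸ iSup_le fun χ => ?_)
      by_cases h : χ = χ₁
      · exact h ▸ le_rfl
      · have : W χ = ⊥ := not_ne_iff.mp fun hne => h (hS χ hne)
        exact this ▸ bot_le
    have hscal : ∀ (a : A) (v : V), (ρ (a : G) : V →ₗ[k] V) v = χ₁ a • v := by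
      intro a v
      exact (hmemW χ₁ v).mp (hWtop ▸ Submodule.mem_top) a
    have hcancel : ∀ c d : k, (∀ v : V, c • v = d • v) → c = d := by
      intro c d h
      obtain ⟨v, hv⟩ := exists_ne (0 : V)
      by_contra hne
      have h0 : (c - d) • v = 0 := by rw [sub_smul, h v, sub_self]
      rcases smul_eq_zero.mp h0 with h' | h'
      · exact hne (sub_eq_zero.mp h')
      · exact hv h'
    constructor
    · -- cyclic
      let χm : A →* k :=
        { toFun := fun a => χ₁ a
          map_one' := hcancel _ _ fun v => by rw [← hscal 1 v]; simp
          map_mul' := by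
            intro a b
            refine hcancel _ _ fun v => ?_
            rw [← hscal (a * b) v, Subgroup.coe_mul, ← hmul, hscal b, map_smul, hscal a,
              smul_smul, mul_comm (χ₁ b)] }
      have hχinj : Function.Injective χm := by
        intro a b h
        have : ρ (a : G) = ρ (b : G) := by
          ext v
          rw [hscal a v, hscal b v]
          exact congrArg (· • v) h
        exact Subtype.ext (hinj this)
      exact isCyclic_of_subgroup_isDomain χm hχinj
    · -- central
      intro x hx
      rw [Subgroup.mem_center_iff]
      intro g
      have : ρ (g * x) = ρ (x * g) := by
        ext v
        rw [← hmul, ← hmul, hscal ⟨x, hx⟩ v, map_smul, hscal ⟨x, hx⟩ ((ρ g : V →ₗ[k] V) v)]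
      exact hinj this
  · -- at least two joint eigenspaces: contradicts primitivity
    exfalso
    push_neg at hS
    obtain ⟨χ₂, hχ₂, hne⟩ := hS
    set Sfin := hSfin.toFinset with hSfdef
    set r := Sfin.card with hrdef
    set e : Fin r ≃ {χ // χ ∈ Sfin} := Sfin.equivFin.symm with hedef
    set Vs : Fin r → Submodule k V := fun i => W ↑(e i) with hVsdef
    apply hprim.2.2
    refine ⟨r, Vs, ?_, ?_, ?_, ?_⟩
    · exact Finset.one_lt_card.mpr
        ⟨χ₂, hSfin.mem_toFinset.mpr hχ₂, χ₁, hSfin.mem_toFinset.mpr hχ₁, hne⟩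
    · intro i
      exact hSfin.mem_toFinset.mp (e i).2
    · rw [DirectSum.isInternal_submodule_iff_iSupIndep_and_iSup_eq_top]
      refine ⟨hindep.comp (Subtype.val_injective.comp e.injective), ?_⟩
      refine le_antisymm le_top (hTtop ▸ iSup_le fun χ => ?_)
      by_cases hm : χ ∈ Sfin
      · have h1 : Vs (e.symm ⟨χ, hm⟩) = W χ := by rw [hVsdef]; simp
        exact h1 ▸ le_iSup Vs (e.symm ⟨χ, hm⟩)
      · have : W χ = ⊥ := not_ne_iff.mp fun hne' => hm (hSfin.mem_toFinset.mpr hne')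
        exact this ▸ bot_le
    · intro g i
      set χ : A → k := ↑(e i) with hχdef
      have hmap := key g χ
      have hne' : W (fun b => χ ⟨g⁻¹ * (b : G) * g, hmemA g b⟩) ≠ ⊥ := by
        rw [← hmap]
        obtain ⟨v, hv, hv0⟩ := (Submodule.ne_bot_iff _).mp (hSfin.mem_toFinset.mp (e i).2)
        refine (Submodule.ne_bot_iff _).mpr ⟨_, Submodule.mem_map_of_mem hv, fun h0 => hv0 ?_⟩
        have := congrArg (ρ g⁻¹ : V →ₗ[k] V) h0
        rwa [hmul, inv_mul_cancel, map_one, Units.val_one, Module.End.one_apply, map_zero] at this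
      refine ⟨e.symm ⟨_, hSfin.mem_toFinset.mpr hne'⟩, ?_⟩
      rw [hmap, hVsdef]
      simp
end

section
/- Let X = X_1 × ⋯ × X_n be a direct product of finitely many nonabelian finite simple groups, and let Y be a subgroup of X such that for each i the projection of Y onto X_i is either all of X_i or trivial. Then Y is isomorphic to a direct product of finitely many nonabelian finite simple groups. -/
/-!
Peel off the first factor: write `X = X₀ × X'` and let `P` be the image of `Y` in `X'`, whose
projections are again full or trivial. The elements `g` with `(g, 1) ∈ Y` form a subgroup of `X₀`
that is normal when `Y` projects onto `X₀` (Goursat), and trivial when that projection is trivial;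
as `X₀` is simple it is `1` or `X₀`. In the first case `Y ≅ P`, in the second `Y = X₀ × P`.
By induction `Y` is isomorphic to the product of a subfamily of the `Xᵢ`.
-/

open Function

def MulEquiv.piFinSucc {n : ℕ} (X : Fin (n + 1) → Type*) [∀ i, Mul (X i)] :
    (∀ i, X i) ≃* X 0 × ∀ i : Fin n, X i.succ :=
  { (Fin.consEquiv X).symm with map_mul' _ _ := rfl }

namespace Subgroup

variable {G H : Type*} [Group G] [Group H] {I : Subgroup (G × H)}

lemma goursatFst_le_map_fst : I.goursatFst ≤ I.map (MonoidHom.fst G H) :=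
  fun g hg => ⟨(g, 1), mem_goursatFst.1 hg, rfl⟩

lemma goursatFst_eq_bot_or_eq_top [IsSimpleGroup G]
    (h : I.map (MonoidHom.fst G H) = ⊤ ∨ I.map (MonoidHom.fst G H) = ⊥) :
    I.goursatFst = ⊥ ∨ I.goursatFst = ⊤ := by
  rcases h with htop | hbot
  · have hsurj : Surjective (Prod.fst ∘ I.subtype) := fun g => by
      obtain ⟨x, hx, rfl⟩ := htop ▸ mem_top g
      exact ⟨⟨x, hx⟩, rfl⟩
    exact (normal_goursatFst hsurj).eq_bot_or_eq_top
  · exact Or.inl (eq_bot_iff.2 (hbot ▸ goursatFst_le_map_fst))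

lemma injective_subgroupMap_snd_of_goursatFst_eq_bot (h : I.goursatFst = ⊥) :
    Injective ((MonoidHom.snd G H).subgroupMap I) := by
  rw [injective_iff_map_eq_one]
  rintro ⟨⟨g, k⟩, hx⟩ h1
  obtain rfl : k = 1 := congrArg Subtype.val h1
  obtain rfl : g = 1 := by simpa [h] using mem_goursatFst.2 hx
  rfl

lemma eq_top_prod_map_snd_of_goursatFst_eq_top (h : I.goursatFst = ⊤) :
    I = (⊤ : Subgroup G).prod (I.map (MonoidHom.snd G H)) := by
  ext ⟨g, k⟩
  constructor
  · exact fun hx => ⟨mem_top g, ⟨_, hx, rfl⟩⟩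
  · rintro ⟨-, ⟨⟨g', k'⟩, hx, rfl⟩⟩
    have hcorr : (g * g'⁻¹, (1 : H)) ∈ I := mem_goursatFst.1 (h ▸ mem_top _)
    simpa using mul_mem hcorr hx

lemma nonempty_mulEquiv_map_snd_or_prod [IsSimpleGroup G]
    (h : I.map (MonoidHom.fst G H) = ⊤ ∨ I.map (MonoidHom.fst G H) = ⊥) :
    Nonempty (I ≃* I.map (MonoidHom.snd G H)) ∨
      Nonempty (I ≃* G × I.map (MonoidHom.snd G H)) := by
  rcases goursatFst_eq_bot_or_eq_top h with hbot | htop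
  · exact Or.inl ⟨MulEquiv.ofBijective _
      ⟨injective_subgroupMap_snd_of_goursatFst_eq_bot hbot, MonoidHom.subgroupMap_surjective _ _⟩⟩
  · exact Or.inr ⟨(MulEquiv.subgroupCongr (eq_top_prod_map_snd_of_goursatFst_eq_top htop)).trans
      ((prodEquiv _ _).trans (topEquiv.prodCongr (MulEquiv.refl _)))⟩

theorem exists_mulEquiv_pi_subfamily : ∀ {n : ℕ} {X : Fin n → Type*} [∀ i, Group (X i)],
    (∀ i, IsSimpleGroup (X i)) → ∀ Y : Subgroup (∀ i, X i),
    (∀ i, Y.map (Pi.evalMonoidHom X i) = ⊤ ∨ Y.map (Pi.evalMonoidHom X i) = ⊥) →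
    ∃ (m : ℕ) (σ : Fin m → Fin n), Nonempty (Y ≃* ∀ j, X (σ j))
  | 0, _, _, _, Y, _ =>
    have : Unique Y := { default := 1, uniq := fun _ => Subsingleton.elim _ _ }
    ⟨0, Fin.elim0, ⟨MulEquiv.ofUnique⟩⟩
  | n + 1, X, _, hX, Y, hY => by
    let e := MulEquiv.piFinSucc X
    let W := Y.map e.toMonoidHom
    have hfst : W.map (MonoidHom.fst _ _) = Y.map (Pi.evalMonoidHom X 0) := by
      rw [map_map]; rfl
    have hsnd (i : Fin n) : (W.map (MonoidHom.snd _ _)).map (Pi.evalMonoidHom _ i) =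
        Y.map (Pi.evalMonoidHom X i.succ) := by
      rw [map_map, map_map]; rfl
    obtain ⟨m, σ, ⟨eP⟩⟩ := exists_mulEquiv_pi_subfamily (fun i => hX i.succ)
      (W.map (MonoidHom.snd _ _)) (fun i => by rw [hsnd]; exact hY i.succ)
    have := hX 0
    rcases nonempty_mulEquiv_map_snd_or_prod (by rw [hfst]; exact hY 0) with ⟨⟨eW⟩⟩ | ⟨⟨eW⟩⟩
    · exact ⟨m, Fin.succ ∘ σ, ⟨(e.subgroupMap Y).trans (eW.trans eP)⟩⟩
    · let τ : Fin (m + 1) → Fin (n + 1) := Fin.cons 0 (Fin.succ ∘ σ)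
      exact ⟨m + 1, τ, ⟨(e.subgroupMap Y).trans <| eW.trans <|
        ((MulEquiv.refl _).prodCongr eP).trans (MulEquiv.piFinSucc fun j => X (τ j)).symm⟩⟩

end Subgroup

/-- Let `X = X 1 × ⋯ × X n` be a direct product of finitely many nonabelian finite simple
groups, and let `Y` be a subgroup of `X` whose projection onto each factor `X i` is either
all of `X i` or trivial.  Then `Y` is isomorphic to a direct product of finitely many
nonabelian finite simple groups. -/
theorem stmt_10 (n : ℕ) (X : Fin n → Type) [∀ i, Group (X i)] [∀ i, Finite (X i)]
    (hsimple : ∀ i, IsSimpleGroup (X i))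
    (hnonab : ∀ i, ∃ a b : X i, a * b ≠ b * a)
    (Y : Subgroup (∀ i, X i))
    (hproj : ∀ i, Subgroup.map (Pi.evalMonoidHom X i) Y = ⊤ ∨
      Subgroup.map (Pi.evalMonoidHom X i) Y = ⊥) :
    ∃ (m : ℕ) (Z : Fin m → Type) (_ : ∀ j, Group (Z j)),
      (∀ j, Finite (Z j)) ∧ (∀ j, IsSimpleGroup (Z j)) ∧
      (∀ j, ∃ a b : Z j, a * b ≠ b * a) ∧
      Nonempty (Y ≃* ((j : Fin m) → Z j)) := by
  obtain ⟨m, σ, hY⟩ := Subgroup.exists_mulEquiv_pi_subfamily hsimple Y hproj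
  exact ⟨m, fun j => X (σ j), fun j => inferInstance, fun j => inferInstance,
    fun j => hsimple (σ j), fun j => hnonab (σ j), hY⟩
end

section
/- Let N, r, L be natural numbers with N ≥ 2, r ≥ 2 and L ≥ 2. If N^L · L! < (r^L + 1)!, then N^{L+1} · (L+1)! < (r^{L+1} + 1)!. -/
/-!
Write `M = r^L`. Since `N(L+1) ≤ N^L L!`, the left-hand side of the conclusion is at most
`(N^L L!)^2 < (M+1)!^2`. Splitting `(2M+1)! = (M+1)! · (M+2)⋯(2M+1)` and comparing the second
factor, a product of `M` terms each exceeding `M+1`, with `(M+1)! = 2⋯(M+1)` gives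
`(M+1)!^2 ≤ (2M+1)! ≤ (rM+1)!`.
-/

namespace Nat

theorem mul_succ_le_pow_mul_factorial {N L : ℕ} (hN : 2 ≤ N) (hL : 2 ≤ L) :
    N * (L + 1) ≤ N ^ L * L ! := by
  obtain ⟨k, rfl⟩ : ∃ k, L = k + 1 := ⟨L - 1, by omega⟩
  have hNk : 2 ≤ N ^ k := le_trans hN (Nat.le_self_pow (by omega) N)
  have hk : k + 1 ≤ (k + 1)! := Nat.self_le_factorial _
  calc N * (k + 1 + 1) ≤ N * (2 * (k + 1)) := by gcongr; omega
    _ ≤ N * (N ^ k * (k + 1)!) := by gcongr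
    _ = N ^ (k + 1) * (k + 1)! := by ring

theorem factorial_succ_le_pow (n : ℕ) : (n + 1)! ≤ (n + 1) ^ n := by
  have h := factorial_mul_descFactorial (n := n + 1) (k := n) (by omega)
  rw [show n + 1 - n = 1 by omega, factorial_one, one_mul] at h
  exact h ▸ descFactorial_le_pow (n + 1) n

theorem factorial_succ_sq_le_factorial (n : ℕ) : (n + 1)! ^ 2 ≤ (2 * n + 1)! :=
  calc (n + 1)! ^ 2 = (n + 1)! * (n + 1)! := sq _
    _ ≤ (n + 1)! * (n + 2) ^ n :=
        Nat.mul_le_mul_left _ ((factorial_succ_le_pow n).trans (Nat.pow_le_pow_left (by omega) n))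
    _ ≤ (n + 1 + n)! := factorial_mul_pow_le_factorial
    _ = (2 * n + 1)! := by ring_nf

end Nat

open Nat

/-- If `N^L · L! < (r^L + 1)!` with `N, r, L ≥ 2`, then
`N^(L+1) · (L+1)! < (r^(L+1) + 1)!`. -/
theorem stmt_13 (N r L : ℕ) (hN : 2 ≤ N) (hr : 2 ≤ r) (hL : 2 ≤ L)
    (h : N ^ L * Nat.factorial L < Nat.factorial (r ^ L + 1)) :
    N ^ (L + 1) * Nat.factorial (L + 1) < Nat.factorial (r ^ (L + 1) + 1) := by
  set X := N ^ L * (L !)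
  have hsplit : N ^ (L + 1) * (L + 1)! = N * (L + 1) * X := by
    rw [pow_succ, factorial_succ]; ring
  have hdouble : 2 * r ^ L ≤ r ^ (L + 1) := by
    rw [pow_succ']; exact Nat.mul_le_mul_right _ hr
  calc N ^ (L + 1) * (L + 1)! = N * (L + 1) * X := hsplit
    _ ≤ X * X := Nat.mul_le_mul_right _ (mul_succ_le_pow_mul_factorial hN hL)
    _ < (r ^ L + 1)! ^ 2 := by rw [← sq]; exact Nat.pow_lt_pow_left h two_ne_zero
    _ ≤ (2 * r ^ L + 1)! := factorial_succ_sq_le_factorial _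
    _ ≤ (r ^ (L + 1) + 1)! := factorial_le (by omega)
end

section
/- For all natural numbers r and l with r ≥ 3 and l ≥ 2, one has ((r+2)!)^l · l! < (r^l + 1)!. -/
/-!
`(m n)! / (n! ^ m * m!)` is the number of ways to split a set of `m n` elements into `m` blocks of
size `n`. As soon as `m, n ≥ 2` there are at least two such splittings, so
`n! ^ m * m! < (m n)!`. Taking `n = r + 2` and `m = l`, it remains to note that
`l (r + 2) ≤ r ^ l + 1` for `r ≥ 3`, `l ≥ 2`, and that the factorial is monotone.
-/

open Nat

namespace Nat

theorem one_lt_uniformBell {m n : ℕ} (hm : 2 ≤ m) (hn : 2 ≤ n) : 1 < m.uniformBell n := by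
  have hchoose : 1 < (1 * n + n - 1).choose (n - 1) :=
    calc 1 < n := hn
      _ = n.choose (n - 1) := by rw [choose_symm (by omega), choose_one_right]
      _ ≤ (1 * n + n - 1).choose (n - 1) := choose_le_choose _ (by omega)
  rw [uniformBell_eq]
  exact hchoose.trans_le <| Finset.single_le_prod'
    (f := fun p => (p * n + n - 1).choose (n - 1))
    (fun _ _ => choose_pos (by omega)) (Finset.mem_range.2 hm)

theorem factorial_pow_mul_factorial_lt_factorial_mul {m n : ℕ} (hm : 2 ≤ m) (hn : 2 ≤ n) :
    n ! ^ m * m ! < (m * n)! := by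
  rw [← uniformBell_mul_eq m (by omega : n ≠ 0), mul_assoc]
  exact lt_mul_left (by positivity) (one_lt_uniformBell hm hn)

theorem mul_add_two_le_pow_add_one {r l : ℕ} (hr : 3 ≤ r) (hl : 2 ≤ l) :
    l * (r + 2) ≤ r ^ l + 1 := by
  induction l, hl using Nat.le_induction with
  | base => nlinarith
  | succ l hl ih =>
    have hrl : r ≤ r ^ l := le_self_pow (by omega) r
    rw [pow_succ]
    nlinarith

end Nat

/-- For all natural numbers `r ≥ 3` and `l ≥ 2`, `((r+2)!)^l · l! < (r^l + 1)!`. -/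
theorem stmt_14 (r l : ℕ) (hr : 3 ≤ r) (hl : 2 ≤ l) :
    Nat.factorial (r + 2) ^ l * Nat.factorial l < Nat.factorial (r ^ l + 1) :=
  calc (r + 2)! ^ l * l ! < (l * (r + 2))! :=
        factorial_pow_mul_factorial_lt_factorial_mul hl (by omega)
    _ ≤ (r ^ l + 1)! := factorial_le (mul_add_two_le_pow_add_one hr hl)
end

section
/- For all natural numbers p and q with 13 ≤ p < q, one has (p+2)! · (q+2)! < (pq + 1)!. -/
/-- For all natural numbers `p, q` with `13 ≤ p < q`, `(p+2)! · (q+2)! < (pq + 1)!`. -/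
theorem stmt_16 (p q : ℕ) (hp : 13 ≤ p) (hpq : p < q) :
    Nat.factorial (p + 2) * Nat.factorial (q + 2) < Nat.factorial (p * q + 1) := by
  have h1 : Nat.factorial (p + 2) * Nat.factorial (q + 2) ≤ Nat.factorial (p + q + 4) := by
    have := Nat.factorial_mul_factorial_dvd_factorial_add (p + 2) (q + 2)
    have heq : p + 2 + (q + 2) = p + q + 4 := by ring
    rw [heq] at this
    exact Nat.le_of_dvd (Nat.factorial_pos _) this
  have h2 : p + q + 4 < p * q + 1 := by nlinarith
  calc Nat.factorial (p + 2) * Nat.factorial (q + 2) ≤ Nat.factorial (p + q + 4) := h1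
    _ < Nat.factorial (p * q + 1) := (Nat.factorial_lt (by positivity)).mpr h2
end

section
/- For all natural numbers m and t with m ≥ 8 and t ≥ 2, one has ((m+2)!)^t · t! < (t·m + 1)!. -/
private lemma auxA (k : ℕ) :
    Nat.factorial (k + 10) ≤ (2 * k + 18) ^ (k + 7) := by
  induction k with
  | zero => norm_num [Nat.factorial]
  | succ n ih =>
    have h : Nat.factorial (n + 1 + 10) = (n + 11) * Nat.factorial (n + 10) := rfl
    rw [h]
    calc (n + 11) * Nat.factorial (n + 10)
        ≤ (2 * (n + 1) + 18) * (2 * n + 18) ^ (n + 7) := by gcongr <;> omega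
      _ ≤ (2 * (n + 1) + 18) * (2 * (n + 1) + 18) ^ (n + 7) := by gcongr <;> omega
      _ = (2 * (n + 1) + 18) ^ (n + 1 + 7) := by rw [← pow_succ']

private lemma auxB (k : ℕ) :
    2 * Nat.factorial (k + 10) < (k + 11) ^ (k + 7) := by
  induction k with
  | zero => norm_num [Nat.factorial]
  | succ n ih =>
    have h : 2 * Nat.factorial (n + 1 + 10) = (n + 11) * (2 * Nat.factorial (n + 10)) := by
      show 2 * ((n + 11) * Nat.factorial (n + 10)) = _
      ring
    rw [h]
    calc (n + 11) * (2 * Nat.factorial (n + 10))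
        < (n + 11) * (n + 11) ^ (n + 7) := by gcongr
      _ = (n + 11) ^ (n + 1 + 7) := by rw [← pow_succ']
      _ ≤ (n + 1 + 11) ^ (n + 1 + 7) := by gcongr <;> omega

private lemma key (m t : ℕ) (hm : 8 ≤ m) (ht : 2 ≤ t) :
    Nat.factorial (t * m + 1) * (Nat.factorial (m + 2) * (t + 1)) ≤
      Nat.factorial ((t + 1) * m + 1) := by
  obtain ⟨k, rfl⟩ : ∃ k, m = k + 8 := ⟨m - 8, by omega⟩
  have h1 : Nat.factorial (k + 8 + 2) * (t + 1) ≤ (t * (k + 8) + 2) ^ (k + 8) := by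
    calc Nat.factorial (k + 8 + 2) * (t + 1)
        ≤ (2 * k + 18) ^ (k + 7) * (t * (k + 8) + 2) := by
          have := auxA k
          have h2 : t + 1 ≤ t * (k + 8) + 2 := by nlinarith
          exact Nat.mul_le_mul this h2
      _ ≤ (t * (k + 8) + 2) ^ (k + 7) * (t * (k + 8) + 2) := by
          apply Nat.mul_le_mul_right
          apply Nat.pow_le_pow_left
          nlinarith
      _ = (t * (k + 8) + 2) ^ (k + 8) := by rw [← pow_succ]
  calc Nat.factorial (t * (k + 8) + 1) * (Nat.factorial (k + 8 + 2) * (t + 1))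
      ≤ Nat.factorial (t * (k + 8) + 1) * (t * (k + 8) + 2) ^ (k + 8) :=
        Nat.mul_le_mul_left _ h1
    _ = Nat.factorial (t * (k + 8) + 1) * (t * (k + 8) + 1 + 1) ^ (k + 8) := by ring_nf
    _ ≤ Nat.factorial (t * (k + 8) + 1 + (k + 8)) := Nat.factorial_mul_pow_le_factorial
    _ = Nat.factorial ((t + 1) * (k + 8) + 1) := by ring_nf

/-- For all natural numbers `m ≥ 8` and `t ≥ 2`, `((m+2)!)^t · t! < (t·m + 1)!`. -/
theorem stmt_19 (m t : ℕ) (hm : 8 ≤ m) (ht : 2 ≤ t) :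
    Nat.factorial (m + 2) ^ t * Nat.factorial t < Nat.factorial (t * m + 1) := by
  induction t, ht using Nat.le_induction with
  | base =>
    obtain ⟨k, rfl⟩ : ∃ k, m = k + 8 := ⟨m - 8, by omega⟩
    have hb : 2 * (k + 8) + 1 = (k + 8 + 2) + (k + 7) := by omega
    calc Nat.factorial (k + 8 + 2) ^ 2 * Nat.factorial 2
        = Nat.factorial (k + 8 + 2) * (2 * Nat.factorial (k + 8 + 2)) := by
          rw [sq]; show _ = _; norm_num [Nat.factorial]; ring
      _ < Nat.factorial (k + 8 + 2) * (k + 11) ^ (k + 7) := by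
          have := auxB k
          gcongr
      _ = Nat.factorial (k + 8 + 2) * (k + 8 + 2 + 1) ^ (k + 7) := by ring_nf
      _ ≤ Nat.factorial ((k + 8 + 2) + (k + 7)) := Nat.factorial_mul_pow_le_factorial
      _ = Nat.factorial (2 * (k + 8) + 1) := by rw [hb]
  | succ n hn ih =>
    have hstep := key m n hm hn
    calc Nat.factorial (m + 2) ^ (n + 1) * Nat.factorial (n + 1)
        = (Nat.factorial (m + 2) ^ n * Nat.factorial n) *
            (Nat.factorial (m + 2) * (n + 1)) := by
          rw [Nat.factorial_succ n]; ring
      _ < Nat.factorial (n * m + 1) * (Nat.factorial (m + 2) * (n + 1)) := by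
          have h0 : 0 < Nat.factorial (m + 2) * (n + 1) := by
            have := Nat.factorial_pos (m + 2); positivity
          exact Nat.mul_lt_mul_of_lt_of_le ih (le_refl _) h0
      _ ≤ Nat.factorial ((n + 1) * m + 1) := hstep
end
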